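/- arXiv:1806.02115 — 7 statements merged into one kernel-verified Lean document; each statement's English description precedes it below -/
import Mathlib

section
/- If G is a nonabelian finite group with an abelian subgroup A and commuting subsets A₁ of G such that G = A ⊎ A₁ (disjoint union), then a contradiction arises; i.e., no nonabelian group admits a 1-abelian partition. -/
/-! If `b ∉ A` and `g ∈ A`, then `g * b ∉ A`, so `g * b` lies in the commuting complement and
commutes with `b`; cancelling `b` shows that `b` commutes with `g`. Hence every element outside
`A` is central, and together with `A` being abelian this makes the whole group abelian. -/

namespace Subgroup

variable {G : Type*} [Group G] {A : Subgroup G}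

theorem commute_of_notMem (hAc : ∀ a ∉ A, ∀ b ∉ A, Commute a b) {b : G} (hb : b ∉ A)
    (g : G) : Commute b g := by
  by_cases hg : g ∈ A
  · have hgb : g * b ∉ A := (A.mul_mem_cancel_left hg).not.mpr hb
    have h : b * (g * b) = g * b * b := hAc b hb _ hgb
    exact mul_right_cancel (by rwa [← mul_assoc] at h)
  · exact hAc b hb g hg

theorem commute_of_compl (hA : ∀ a ∈ A, ∀ b ∈ A, Commute a b)
    (hAc : ∀ a ∉ A, ∀ b ∉ A, Commute a b) (x y : G) : Commute x y := by
  by_cases hx : x ∈ A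
  · by_cases hy : y ∈ A
    · exact hA x hx y hy
    · exact (commute_of_notMem hAc hy x).symm
  · exact commute_of_notMem hAc hx y

end Subgroup

theorem no_one_abelian_partition_general {G : Type*} [Group G]
    (hG : ¬ ∀ a b : G, a * b = b * a)
    (A : Subgroup G) (hA : ∀ a ∈ A, ∀ b ∈ A, a * b = b * a)
    (A₁ : Set G) (hA₁ : ∀ a ∈ A₁, ∀ b ∈ A₁, a * b = b * a)
    (hdisj : Disjoint (A : Set G) A₁)
    (hunion : (A : Set G) ∪ A₁ = Set.univ) : False := by
  have hcompl : (A : Set G)ᶜ = A₁ := (isCompl_iff.2 ⟨hdisj, codisjoint_iff.2 hunion⟩).compl_eq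
  rw [← hcompl] at hA₁
  exact hG (A.commute_of_compl hA hA₁)

/-- No nonabelian finite group admits a 1-abelian partition: if `G` is the disjoint
union of an abelian subgroup `A` and a single commuting subset `A₁` with `|A₁| > 1`,
a contradiction arises. -/
theorem no_one_abelian_partition {G : Type*} [Group G] [Finite G]
    (hG : ¬ ∀ a b : G, a * b = b * a)
    (A : Subgroup G) (hA : ∀ a ∈ A, ∀ b ∈ A, a * b = b * a)
    (A₁ : Set G) (hA₁ : ∀ a ∈ A₁, ∀ b ∈ A₁, a * b = b * a)
    (hcard : 1 < A₁.ncard)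
    (hdisj : Disjoint (A : Set G) A₁)
    (hunion : (A : Set G) ∪ A₁ = Set.univ) : False :=
  no_one_abelian_partition_general hG A hA A₁ hA₁ hdisj hunion
end

section
/- Let G be a finite group and let {g₁, ..., gₘ} be a noncommuting subset of G of maximum cardinality. Then the intersection ⋂ᵢ C_G(gᵢ) of the centralizers of the gᵢ is an abelian subgroup of G. -/
/-!
If `a` and `b` lie in the centralizer of a maximum noncommuting set `s` but do not commute,
then `{b} ∪ s·a` is a strictly larger noncommuting set: for `g, h` commuting with `a`, the
products `g a` and `h a` commute iff `g` and `h` do, and `b` fails to commute with every `g a`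
because it commutes with `g` but not with `a`.
-/

namespace Commute

variable {G : Type*} [Group G] {a g x : G}

theorem commute_mul_right_iff (ha : Commute a x) : Commute (g * a) x ↔ Commute g x :=
  ⟨fun h ↦ by simpa using h.mul_left ha.inv_left, fun h ↦ h.mul_left ha⟩

theorem commute_mul_left_iff (hg : Commute g x) : Commute (g * a) x ↔ Commute a x :=
  ⟨fun h ↦ by simpa using hg.inv_left.mul_left h, fun h ↦ hg.mul_left h⟩

end Commute

section Noncommuting

variable {G : Type*} [Group G] {s : Set G} {a b : G}

theorem Set.Pairwise.image_mul_right_of_mem_centralizer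
    (hs : s.Pairwise fun x y ↦ ¬Commute x y) (ha : a ∈ Subgroup.centralizer s) :
    ((· * a) '' s).Pairwise fun x y ↦ ¬Commute x y := by
  rw [(mul_left_injective a).injOn.pairwise_image]
  intro g hg h hh hgh hcomm
  have hag : Commute a g := (ha g hg).symm
  have hah : Commute a h := (ha h hh).symm
  have : Commute g (h * a) := ((hah.mul_right (Commute.refl a)).commute_mul_right_iff).mp hcomm
  exact hs hg hh hgh (hag.commute_mul_right_iff.mp this.symm).symm

theorem not_commute_mul_right_of_mem_centralizer (hb : b ∈ Subgroup.centralizer s)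
    (hab : ¬Commute a b) : ∀ y ∈ (· * a) '' s, ¬Commute y b := by
  rintro _ ⟨g, hg, rfl⟩ hcomm
  exact hab ((Commute.commute_mul_left_iff (hb g hg)).mp hcomm)

end Noncommuting

theorem centralizer_inter_of_max_noncommuting_is_abelian_general {G : Type*} [Group G]
    (s : Finset G)
    (hnc : ∀ a ∈ s, ∀ b ∈ s, a ≠ b → a * b ≠ b * a)
    (hmax : ∀ t : Finset G, (∀ a ∈ t, ∀ b ∈ t, a ≠ b → a * b ≠ b * a) → t.card ≤ s.card) :
    ∀ a ∈ Subgroup.centralizer (s : Set G), ∀ b ∈ Subgroup.centralizer (s : Set G),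
      a * b = b * a := by
  classical
  intro a ha b hb
  by_contra hab
  set t := s.image (· * a)
  have ht : (t : Set G) = (· * a) '' s := Finset.coe_image
  have hbt : ∀ y ∈ (t : Set G), ¬Commute y b :=
    ht ▸ not_commute_mul_right_of_mem_centralizer hb hab
  have hb_notMem : b ∉ t := fun hb' ↦ hbt b hb' (Commute.refl b)
  have hnc_insert : (insert b (t : Set G)).Pairwise fun x y ↦ ¬Commute x y :=
    Set.pairwise_insert.mpr
      ⟨ht ▸ Set.Pairwise.image_mul_right_of_mem_centralizer hnc ha,
        fun y hy _ ↦ ⟨fun h ↦ hbt y hy h.symm, hbt y hy⟩⟩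
  rw [← Finset.coe_insert] at hnc_insert
  have hcard := hmax (insert b t) hnc_insert
  rw [Finset.card_insert_of_notMem hb_notMem,
    Finset.card_image_of_injective s (mul_left_injective a)] at hcard
  omega

/-- If `s` is a noncommuting subset of a finite group `G` of maximum cardinality,
then the intersection of the centralizers of its elements is an abelian subgroup. -/
theorem centralizer_inter_of_max_noncommuting_is_abelian {G : Type*} [Group G] [Finite G]
    (s : Finset G)
    (hnc : ∀ a ∈ s, ∀ b ∈ s, a ≠ b → a * b ≠ b * a)
    (hmax : ∀ t : Finset G, (∀ a ∈ t, ∀ b ∈ t, a ≠ b → a * b ≠ b * a) → t.card ≤ s.card) :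
    ∀ a ∈ Subgroup.centralizer (s : Set G), ∀ b ∈ Subgroup.centralizer (s : Set G),
      a * b = b * a :=
  centralizer_inter_of_max_noncommuting_is_abelian_general s hnc hmax
end

section
/- If a finite nonabelian group G has an n-abelian partition, then the maximum size nc(G) of a noncommuting subset of G satisfies nc(G) ≤ n + 1. -/
/-- A commuting subset of a group: all pairs of elements commute. -/
def IsCommSet {G : Type*} [Group G] (s : Set G) : Prop :=
  ∀ a ∈ s, ∀ b ∈ s, a * b = b * a

/-- `G` has an `n`-abelian partition: `G` is the disjoint union of an abelian subgroup `A`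
and `n` pairwise disjoint commuting subsets, each of size `> 1`. -/
def HasAbelianPartition (G : Type*) [Group G] (n : ℕ) : Prop :=
  ∃ (A : Subgroup G) (B : Fin n → Set G),
    (∀ a ∈ A, ∀ b ∈ A, a * b = b * a) ∧
    (∀ i, IsCommSet (B i)) ∧ (∀ i, 1 < (B i).ncard) ∧
    (∀ i, Disjoint (A : Set G) (B i)) ∧
    (Pairwise fun i j => Disjoint (B i) (B j)) ∧
    ((A : Set G) ∪ ⋃ i, B i) = Set.univ

/-- A noncommuting set meets each commuting set of a cover at most once. -/
theorem card_le_of_forall_mem_isCommSet {G ι : Type*} [Group G] [Fintype ι]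
    (C : ι → Set G) (hC : ∀ i, IsCommSet (C i)) (hcover : ∀ x, ∃ i, x ∈ C i)
    (s : Finset G) (hs : (s : Set G).Pairwise fun a b => a * b ≠ b * a) :
    s.card ≤ Fintype.card ι := by
  choose f hf using hcover
  have hinj : Set.InjOn f s := fun x hx y hy hxy => by
    by_contra hne
    exact hs hx hy hne (hC (f y) x (hxy ▸ hf x) y (hf y))
  simpa using Finset.card_le_card_of_injOn f (fun x _ => Finset.mem_univ (f x)) hinj

theorem HasAbelianPartition.exists_isCommSet_cover {G : Type*} [Group G] {n : ℕ}
    (hpart : HasAbelianPartition G n) :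
    ∃ C : Option (Fin n) → Set G, (∀ i, IsCommSet (C i)) ∧ ∀ x, ∃ i, x ∈ C i := by
  obtain ⟨A, B, hA, hB, -, -, -, hcover⟩ := hpart
  refine ⟨fun i => i.elim (A : Set G) B, fun i => ?_, fun x => ?_⟩
  · cases i with
    | none => exact hA
    | some i => exact hB i
  · have hx : x ∈ (A : Set G) ∪ ⋃ i, B i := hcover ▸ Set.mem_univ x
    rcases hx with hxA | hxB
    · exact ⟨none, hxA⟩
    · obtain ⟨i, hi⟩ := Set.mem_iUnion.mp hxB
      exact ⟨some i, hi⟩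

theorem noncommuting_card_le_of_abelian_partition_general {G : Type*} [Group G]
    (n : ℕ) (hpart : HasAbelianPartition G n) :
    ∀ s : Finset G, (∀ a ∈ s, ∀ b ∈ s, a ≠ b → a * b ≠ b * a) → s.card ≤ n + 1 := by
  intro s hs
  obtain ⟨C, hC, hcover⟩ := hpart.exists_isCommSet_cover
  simpa using card_le_of_forall_mem_isCommSet C hC hcover s hs

/-- If a finite nonabelian group has an `n`-abelian partition, then any noncommuting
subset has at most `n + 1` elements, i.e. `nc(G) ≤ n + 1`. -/
theorem noncommuting_card_le_of_abelian_partition {G : Type*} [Group G] [Finite G]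
    (hG : ¬ ∀ a b : G, a * b = b * a) (n : ℕ) (hpart : HasAbelianPartition G n) :
    ∀ s : Finset G, (∀ a ∈ s, ∀ b ∈ s, a ≠ b → a * b ≠ b * a) → s.card ≤ n + 1 :=
  noncommuting_card_le_of_abelian_partition_general n hpart
end

section
/- If a finite nonabelian group G has an n-abelian partition, then n ≥ ⌊|G| / k(G)⌋ − 1, where k(G) is the number of conjugacy classes of G. -/
open Finset

theorem card_filter_eq_comp_eq_sum_sq {α ι : Type*} [Fintype α] [Fintype ι] [DecidableEq ι]
    (f : α → ι) : #{p : α × α | f p.1 = f p.2} = ∑ i, #{a | f a = i} ^ 2 := by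
  rw [card_eq_sum_card_fiberwise (f := fun p => f p.1) (t := univ) fun _ _ => mem_univ _]
  refine sum_congr rfl fun i _ => ?_
  rw [sq, ← card_product]
  congr 1
  ext ⟨a, b⟩
  simp only [mem_filter, mem_univ, true_and, mem_product]
  grind

theorem sq_card_le_card_mul_card_filter_eq_comp {α ι : Type*} [Fintype α] [Fintype ι]
    [DecidableEq ι] (f : α → ι) :
    Fintype.card α ^ 2 ≤ Fintype.card ι * #{p : α × α | f p.1 = f p.2} := by
  rw [card_filter_eq_comp_eq_sum_sq, ← card_univ (α := α),
    card_eq_sum_card_fiberwise (f := f) (t := univ) fun _ _ => mem_univ _]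
  exact sq_sum_le_card_mul_sum_sq

theorem card_le_card_mul_card_conjClasses_of_commute {G ι : Type*} [Group G] [Finite G]
    [Fintype ι] (f : G → ι) (hf : ∀ g h, f g = f h → Commute g h) :
    Nat.card G ≤ Fintype.card ι * Nat.card (ConjClasses G) := by
  classical
  have := Fintype.ofFinite G
  have hcomm : #{p : G × G | f p.1 = f p.2} ≤ Nat.card (ConjClasses G) * Nat.card G := by
    rw [← card_comm_eq_card_conjClasses_mul_card, Nat.card_eq_fintype_card, Fintype.card_subtype]
    exact card_le_card (monotone_filter_right univ fun (p : G × G) _ => hf p.1 p.2)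
  refine Nat.le_of_mul_le_mul_right ?_ (Nat.card_pos (α := G))
  calc Nat.card G * Nat.card G = Fintype.card G ^ 2 := by rw [sq, Nat.card_eq_fintype_card]
    _ ≤ Fintype.card ι * #{p : G × G | f p.1 = f p.2} :=
        sq_card_le_card_mul_card_filter_eq_comp f
    _ ≤ Fintype.card ι * (Nat.card (ConjClasses G) * Nat.card G) := Nat.mul_le_mul_left _ hcomm
    _ = Fintype.card ι * Nat.card (ConjClasses G) * Nat.card G := (mul_assoc ..).symm

theorem card_le_card_mul_card_conjClasses_of_iUnion_eq_univ {G ι : Type*} [Group G] [Finite G]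
    [Fintype ι] (C : ι → Set G) (hC : ∀ i, IsCommSet (C i)) (hcover : ⋃ i, C i = Set.univ) :
    Nat.card G ≤ Fintype.card ι * Nat.card (ConjClasses G) := by
  choose f hf using fun g => Set.mem_iUnion.1 (hcover ▸ Set.mem_univ g)
  refine card_le_card_mul_card_conjClasses_of_commute f fun g h hgh => ?_
  exact hC (f g) g (hf g) h (hgh ▸ hf h)

theorem HasAbelianPartition.card_le {G : Type*} [Group G] [Finite G] {n : ℕ}
    (hpart : HasAbelianPartition G n) : Nat.card G ≤ (n + 1) * Nat.card (ConjClasses G) := by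
  obtain ⟨A, B, hA, hB, -, -, -, hcover⟩ := hpart
  have hC : ∀ o : Option (Fin n), IsCommSet (o.elim (A : Set G) B)
    | none => hA
    | some i => hB i
  have hcoverC : ⋃ o : Option (Fin n), o.elim (A : Set G) B = Set.univ := by
    rw [← hcover, Set.iUnion_option]
    rfl
  simpa using card_le_card_mul_card_conjClasses_of_iUnion_eq_univ _ hC hcoverC

theorem abelian_partition_lower_bound_general {G : Type*} [Group G] [Finite G]
    (n : ℕ) (hpart : HasAbelianPartition G n) :
    Nat.card G / Nat.card (ConjClasses G) - 1 ≤ n := by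
  have : Nat.card G / Nat.card (ConjClasses G) ≤ n + 1 :=
    Nat.div_le_of_le_mul (by simpa [mul_comm] using hpart.card_le)
  omega

/-- If a finite nonabelian group `G` has an `n`-abelian partition, then
`n ≥ ⌊|G| / k(G)⌋ − 1`, where `k(G)` is the number of conjugacy classes. -/
theorem abelian_partition_lower_bound {G : Type*} [Group G] [Finite G]
    (hG : ¬ ∀ a b : G, a * b = b * a) (n : ℕ) (hpart : HasAbelianPartition G n) :
    Nat.card G / Nat.card (ConjClasses G) - 1 ≤ n :=
  abelian_partition_lower_bound_general n hpart
end

section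
/- If a finite nonabelian group G has a 2-abelian partition with respect to an abelian subgroup A, then every conjugacy class of G has size 1 or 2; consequently G = P × Q where P is a Sylow 2-subgroup with P/Z(P) ≅ ℤ₂ × ℤ₂ and Q is abelian. -/
open Subgroup

namespace Subgroup

variable {G : Type*} [Group G] {H₁ H₂ H₃ : Subgroup G}

theorem exists_notMem_notMem_of_ne_top (h₁ : H₁ ≠ ⊤) (h₂ : H₂ ≠ ⊤) :
    ∃ g, g ∉ H₁ ∧ g ∉ H₂ := by
  obtain ⟨x, -, hx⟩ := SetLike.exists_of_lt h₁.lt_top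
  obtain ⟨y, -, hy⟩ := SetLike.exists_of_lt h₂.lt_top
  by_cases hx₂ : x ∈ H₂
  · by_cases hy₁ : y ∈ H₁
    · exact ⟨x * y, fun h => hx (by simpa using mul_mem h (inv_mem hy₁)),
        fun h => hy (by simpa using mul_mem (inv_mem hx₂) h)⟩
    · exact ⟨y, hy₁, hy⟩
  · exact ⟨x, hx, hx₂⟩

theorem mul_mem_of_cover (hcov : ∀ g, g ∈ H₁ ∨ g ∈ H₂ ∨ g ∈ H₃) {x y : G}
    (hx₂ : x ∈ H₂) (hx₃ : x ∉ H₃) (hy₂ : y ∉ H₂) (hy₃ : y ∈ H₃) : y * x ∈ H₁ := by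
  rcases hcov (y * x) with h | h | h
  · exact h
  · exact absurd (by simpa using mul_mem h (inv_mem hx₂)) hy₂
  · exact absurd (by simpa using mul_mem (inv_mem hy₃) h) hx₃

theorem inf_le_of_cover (hcov : ∀ g, g ∈ H₁ ∨ g ∈ H₂ ∨ g ∈ H₃) {c : G}
    (hc₁ : c ∉ H₁) (hc₂ : c ∉ H₂) : H₁ ⊓ H₂ ≤ H₃ := by
  intro x ⟨hx₁, hx₂⟩
  by_contra hx₃
  have hc₃ : c ∈ H₃ := by have := hcov c; tauto
  have : c * x ∈ H₂ := mul_mem_of_cover (fun g => by have := hcov g; tauto) hx₁ hx₃ hc₁ hc₃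
  exact hc₂ (by simpa using mul_mem this (inv_mem hx₂))

theorem index_le_two_of_cover (hcov : ∀ g, g ∈ H₁ ∨ g ∈ H₂ ∨ g ∈ H₃)
    (h₁ : H₁ ≠ ⊤) (h₂ : H₂ ≠ ⊤) (h₃ : H₃ ≠ ⊤) : H₁.index ≤ 2 := by
  obtain ⟨a, ha₂, ha₃⟩ := exists_notMem_notMem_of_ne_top h₂ h₃
  obtain ⟨b, hb₁, hb₃⟩ := exists_notMem_notMem_of_ne_top h₁ h₃
  obtain ⟨c, hc₁, hc₂⟩ := exists_notMem_notMem_of_ne_top h₁ h₂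
  have h₂₃ : H₂ ⊓ H₃ ≤ H₁ :=
    inf_le_of_cover (fun g => by have := hcov g; tauto) ha₂ ha₃
  have hb₂ : b ∈ H₂ := by have := hcov b; tauto
  have hc₃ : c ∈ H₃ := by have := hcov c; tauto
  have hcg : ∀ g, g ∉ H₁ → c * g ∈ H₁ := by
    intro g hg₁
    rcases (hcov g).resolve_left hg₁ with hg₂ | hg₃
    · exact mul_mem_of_cover hcov hg₂ (fun hg₃ => hg₁ (h₂₃ ⟨hg₂, hg₃⟩)) hc₂ hc₃
    · have hbg : b * g ∈ H₁ :=
        mul_mem_of_cover (fun g => by have := hcov g; tauto) hg₃ (fun hg₂ => hg₁ (h₂₃ ⟨hg₂, hg₃⟩)) hb₃ hb₂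
      have hcb : c * b⁻¹ ∈ H₁ := mul_mem_of_cover hcov (inv_mem hb₂)
        (fun h => hb₃ (by simpa using inv_mem h)) hc₂ hc₃
      simpa using mul_mem hcb hbg
  have hcosets : (Set.univ : Set (G ⧸ H₁)) ⊆ {((1 : G) : G ⧸ H₁), ((c⁻¹ : G) : G ⧸ H₁)} := by
    rintro ⟨g⟩ -
    by_cases hg₁ : g ∈ H₁
    · exact Or.inl (QuotientGroup.eq.mpr (by simpa using hg₁))
    · exact Or.inr (QuotientGroup.eq.mpr (by simpa using inv_mem (hcg g hg₁)))
  calc H₁.index = (Set.univ : Set (G ⧸ H₁)).ncard := by rw [Set.ncard_univ]; rfl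
    _ ≤ _ := Set.ncard_le_ncard hcosets
    _ ≤ 2 := (Set.ncard_insert_le _ _).trans (by simp)

theorem index_center_le_four_of_cover [Finite G] (hcov : ∀ g, g ∈ H₁ ∨ g ∈ H₂ ∨ g ∈ H₃)
    (hG : ¬ ∀ a b : G, a * b = b * a) (c₁ : IsCommSet (H₁ : Set G))
    (c₂ : IsCommSet (H₂ : Set G)) (c₃ : IsCommSet (H₃ : Set G)) :
    (center G).index ≤ 4 := by
  have ne_top : ∀ {H : Subgroup G}, IsCommSet (H : Set G) → H ≠ ⊤ := by
    rintro H hH rfl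
    exact hG fun a b => hH a trivial b trivial
  have h₁ := ne_top c₁
  have h₂ := ne_top c₂
  have h₃ := ne_top c₃
  obtain ⟨c, hc₁, hc₂⟩ := exists_notMem_notMem_of_ne_top h₁ h₂
  have hcentral : H₁ ⊓ H₂ ≤ center G := by
    intro z hz
    have hz₃ := inf_le_of_cover hcov hc₁ hc₂ hz
    refine mem_center_iff.mpr fun g => ?_
    rcases hcov g with hg | hg | hg
    · exact c₁ g hg z hz.1
    · exact c₂ g hg z hz.2
    · exact c₃ g hg z hz₃
  calc (center G).index ≤ (H₁ ⊓ H₂).index := index_antitone hcentral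
    _ ≤ H₁.index * H₂.index := index_inf_le
    _ ≤ 2 * 2 := Nat.mul_le_mul (index_le_two_of_cover hcov h₁ h₂ h₃)
        (index_le_two_of_cover (fun g => by have := hcov g; tauto) h₂ h₁ h₃)

end Subgroup

theorem IsCommSet.closure {G : Type*} [Group G] {s : Set G} (hs : IsCommSet s) :
    IsCommSet (Subgroup.closure s : Set G) := fun a ha b hb =>
  Set.centralizer_centralizer_comm_of_comm hs a (closure_le_centralizer_centralizer s ha)
    b (closure_le_centralizer_centralizer s hb)

theorem Subgroup.nat_card_isConj_eq_index_centralizer {G : Type*} [Group G] (g : G) :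
    Nat.card {h : G // IsConj g h} = (centralizer {g}).index := by
  rw [centralizer_eq_comap_stabilizer]
  erw [index_comap_of_surjective _ (ConjAct.toConjAct (G := G)).surjective]
  rw [MulAction.index_stabilizer, ← Nat.card_coe_set_eq]
  exact Nat.card_congr <| Equiv.subtypeEquivRight fun h => by
    rw [ConjAct.mem_orbit_conjAct, isConj_comm]

theorem Subgroup.normal_of_le_center {G : Type*} [Group G] {H : Subgroup G}
    (hH : H ≤ center G) : H.Normal :=
  ⟨fun n hn g => by rw [mem_center_iff.mp (hH hn) g, mul_inv_cancel_right]; exact hn⟩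

section CenterIndexFour

variable {G : Type*} [Group G] [Finite G]

theorem Subgroup.index_centralizer_le_two (hZ : (center G).index ≤ 4) (g : G) :
    (centralizer {g}).index ≤ 2 := by
  by_cases hg : g ∈ center G
  · simp [centralizer_eq_top_iff_subset.mpr (Set.singleton_subset_iff.mpr hg)]
  have hle : center G ≤ centralizer {g} := fun z hz => by
    simpa [mem_centralizer_iff] using (mem_center_iff.mp hz g)
  have hrel₁ : (center G).relIndex (centralizer {g}) ≠ 1 := fun h =>
    hg (relIndex_eq_one.mp h (mem_centralizer_singleton_iff.mpr rfl))
  have hrel₀ : (center G).relIndex (centralizer {g}) ≠ 0 := FiniteIndex.index_ne_zero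
  have := relIndex_mul_index hle
  nlinarith [Nat.two_le_iff _ |>.mpr ⟨hrel₀, hrel₁⟩]

theorem card_isConj_eq_one_or_two (hZ : (center G).index ≤ 4) (g : G) :
    Nat.card {h : G // IsConj g h} = 1 ∨ Nat.card {h : G // IsConj g h} = 2 := by
  have h₀ : (centralizer {g}).index ≠ 0 := index_ne_zero_of_finite
  have h₂ := index_centralizer_le_two hZ g
  rw [nat_card_isConj_eq_index_centralizer]
  omega

theorem isKleinFour_quotient_center (hG : ¬ ∀ a b : G, a * b = b * a)
    (hZ : (center G).index ≤ 4) : IsKleinFour (G ⧸ center G) := by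
  have hnc : ¬ IsCyclic (G ⧸ center G) := fun _ =>
    hG (isMulCommutative_of_isCyclic_quotient_center_self G).is_comm.comm
  have hcard : Nat.card (G ⧸ center G) = 2 ^ 2 := by
    have h₀ : (center G).index ≠ 0 := index_ne_zero_of_finite
    have h₁ : (center G).index ≠ 1 := fun h =>
      hG fun a b => mem_center_iff.mp (index_eq_one.mp h ▸ mem_top b) a
    have prime_card : ∀ p, p.Prime → (center G).index ≠ p := fun p hp h =>
      have : Fact p.Prime := ⟨hp⟩
      hnc (isCyclic_of_prime_card h)
    have := prime_card 2 Nat.prime_two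
    have := prime_card 3 Nat.prime_three
    change (center G).index = 4
    omega
  exact ⟨hcard, (not_isCyclic_iff_exponent_eq_prime Nat.prime_two hcard).mp hnc⟩

end CenterIndexFour

namespace Subgroup.IsComplement'

variable {G : Type*} [Group G] {H K : Subgroup G}

theorem comap_subtype_center (h : IsComplement' H K) (hK : K ≤ center G) :
    (center G).comap H.subtype = center H := by
  ext x
  simp only [mem_comap, coe_subtype, mem_center_iff]
  refine ⟨fun hx y => Subtype.ext (hx y), fun hx g => ?_⟩
  obtain ⟨⟨y, k⟩, rfl⟩ := h.2 g
  have hy : (y : G) * x = x * y := congrArg Subtype.val (hx y)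
  have hk : (x : G) * k = k * x := mem_center_iff.mp (hK k.2) x
  rw [mul_assoc, ← hk, ← mul_assoc, hy, mul_assoc]

theorem surjective_mk_comp_subtype (h : IsComplement' H K) (hK : K ≤ center G) :
    Function.Surjective ((QuotientGroup.mk' (center G)).comp H.subtype) := by
  intro q
  obtain ⟨g, rfl⟩ := QuotientGroup.mk'_surjective _ q
  obtain ⟨⟨y, k⟩, rfl⟩ := h.2 g
  exact ⟨y, QuotientGroup.eq.mpr (by simpa using hK k.2)⟩

noncomputable def quotientCenterEquiv (h : IsComplement' H K) (hK : K ≤ center G) :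
    H ⧸ center H ≃* G ⧸ center G :=
  (QuotientGroup.quotientMulEquivOfEq (by
    rw [← MonoidHom.comap_ker, QuotientGroup.ker_mk', h.comap_subtype_center hK])).trans
    (QuotientGroup.quotientKerEquivOfSurjective _ (h.surjective_mk_comp_subtype hK))

end Subgroup.IsComplement'

theorem isNilpotent_of_isMulCommutative_quotient_center {G : Type*} [Group G]
    (h : IsMulCommutative (G ⧸ center G)) : Group.IsNilpotent G :=
  have : Group.IsNilpotent (G ⧸ center G) := ⟨1, upperCentralSeries_one_eq_top_iff.mpr h⟩
  Subgroup.isNilpotent_of_ker_le_center (QuotientGroup.mk' (center G)) (by simp)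

section QuotientCenterExponentTwo

variable {G : Type*} [Group G] (hexp : Monoid.exponent (G ⧸ center G) = 2)
include hexp

theorem mem_center_of_odd_orderOf {g : G} (hg : Odd (orderOf g)) : g ∈ center G := by
  have h₂ : (g : G ⧸ center G) ^ 2 = 1 := hexp ▸ Monoid.pow_exponent_eq_one _
  have hodd : (g : G ⧸ center G) ^ orderOf g = 1 := by
    rw [← QuotientGroup.mk_pow, pow_orderOf_eq_one, QuotientGroup.mk_one]
  have := pow_gcd_eq_one.mpr ⟨h₂, hodd⟩
  rwa [Nat.coprime_two_left.mpr hg, pow_one, QuotientGroup.eq_one_iff] at this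

theorem le_center_of_odd_card {Q : Subgroup G} (hQ : Odd (Nat.card Q)) : Q ≤ center G :=
  fun _ hq => mem_center_of_odd_orderOf hexp <|
    hQ.of_dvd_nat (Subgroup.orderOf_dvd_natCard Q hq)

theorem exists_isComplement'_le_center [Finite G] (P : Sylow 2 G) [(P : Subgroup G).Normal] :
    ∃ Q : Subgroup G, IsComplement' P Q ∧ Q ≤ center G := by
  obtain ⟨Q, hPQ⟩ := exists_right_complement'_of_coprime P.card_coprime_index
  refine ⟨Q, hPQ, le_center_of_odd_card hexp ?_⟩
  rw [← hPQ.symm.index_eq_card, Nat.odd_iff, ← Nat.two_dvd_ne_zero]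
  exact P.not_dvd_index

end QuotientCenterExponentTwo

theorem two_abelian_partition_structure_general {G : Type*} [Group G] [Finite G]
    (hG : ¬ ∀ a b : G, a * b = b * a)
    (A : Subgroup G) (hA : ∀ a ∈ A, ∀ b ∈ A, a * b = b * a)
    (A₁ A₂ : Set G) (h1 : IsCommSet A₁) (h2 : IsCommSet A₂)
    (hu : (A : Set G) ∪ A₁ ∪ A₂ = Set.univ) :
    (∀ g : G, Nat.card {h : G // IsConj g h} = 1 ∨ Nat.card {h : G // IsConj g h} = 2) ∧
    ∃ (P : Sylow 2 G) (Q : Subgroup G),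
      (P : Subgroup G).Normal ∧ Q.Normal ∧ IsCompl (P : Subgroup G) Q ∧
      (∀ a ∈ Q, ∀ b ∈ Q, a * b = b * a) ∧
      Nonempty ((↥(P : Subgroup G) ⧸ Subgroup.center ↥(P : Subgroup G)) ≃*
        (Multiplicative (ZMod 2) × Multiplicative (ZMod 2))) := by
  have hcov : ∀ g, g ∈ A ∨ g ∈ closure A₁ ∨ g ∈ closure A₂ := fun g => by
    rcases hu.symm ▸ Set.mem_univ g with (hg | hg) | hg
    · exact Or.inl hg
    · exact Or.inr (Or.inl (subset_closure hg))
    · exact Or.inr (Or.inr (subset_closure hg))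
  have hZ := index_center_le_four_of_cover hcov hG hA h1.closure h2.closure
  have := isKleinFour_quotient_center hG hZ
  have := isNilpotent_of_isMulCommutative_quotient_center (G := G) IsKleinFour.isMulCommutative
  obtain ⟨P⟩ : Nonempty (Sylow 2 G) := inferInstance
  obtain ⟨Q, hPQ, hQ⟩ := exists_isComplement'_le_center IsKleinFour.exponent_two P
  refine ⟨card_isConj_eq_one_or_two hZ, P, Q, inferInstance, normal_of_le_center hQ,
    hPQ.isCompl, fun a _ b hb => mem_center_iff.mp (hQ hb) a, ⟨?_⟩⟩
  exact (hPQ.quotientCenterEquiv hQ).trans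
    (IsKleinFour.nonempty_mulEquiv.some.trans (MulEquiv.prodMultiplicative _ _))

/-- If a finite nonabelian group `G` has a 2-abelian partition with respect to an abelian
subgroup `A`, then every conjugacy class of `G` has size 1 or 2; consequently `G = P × Q`
(internally) where `P` is a Sylow 2-subgroup with `P/Z(P) ≅ ℤ₂ × ℤ₂` and `Q` is abelian. -/
theorem two_abelian_partition_structure {G : Type*} [Group G] [Finite G]
    (hG : ¬ ∀ a b : G, a * b = b * a)
    (A : Subgroup G) (hA : ∀ a ∈ A, ∀ b ∈ A, a * b = b * a)
    (A₁ A₂ : Set G) (h1 : IsCommSet A₁) (h2 : IsCommSet A₂)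
    (hc1 : 1 < A₁.ncard) (hc2 : 1 < A₂.ncard)
    (d1 : Disjoint (A : Set G) A₁) (d2 : Disjoint (A : Set G) A₂) (d12 : Disjoint A₁ A₂)
    (hu : (A : Set G) ∪ A₁ ∪ A₂ = Set.univ) :
    (∀ g : G, Nat.card {h : G // IsConj g h} = 1 ∨ Nat.card {h : G // IsConj g h} = 2) ∧
    ∃ (P : Sylow 2 G) (Q : Subgroup G),
      (P : Subgroup G).Normal ∧ Q.Normal ∧ IsCompl (P : Subgroup G) Q ∧
      (∀ a ∈ Q, ∀ b ∈ Q, a * b = b * a) ∧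
      Nonempty ((↥(P : Subgroup G) ⧸ Subgroup.center ↥(P : Subgroup G)) ≃*
        (Multiplicative (ZMod 2) × Multiplicative (ZMod 2))) :=
  two_abelian_partition_structure_general hG A hA A₁ A₂ h1 h2 hu
end

section
/- Let G be a finite group such that G = P × Q where P is a Sylow 2-subgroup with P/Z(P) ≅ ℤ₂ × ℤ₂ and Q is abelian. Then G has a 2-abelian partition: G is the disjoint union of an abelian subgroup A of index 2 and two commuting subsets, each a coset of the center Z(G). -/
namespace Subgroup

variable {G : Type*} [Group G]

section InternalProduct

variable {H K : Subgroup G}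

theorem mem_center_of_sup_eq_top (hsup : H ⊔ K = ⊤) {g : G} (hH : ∀ h ∈ H, Commute h g)
    (hK : ∀ k ∈ K, Commute k g) : g ∈ center G := by
  have hle : H ⊔ K ≤ centralizer {g} :=
    sup_le (fun h hh => mem_centralizer_singleton_iff.2 (hH h hh).eq)
      (fun k hk => mem_centralizer_singleton_iff.2 (hK k hk).eq)
  rw [hsup, top_le_iff, centralizer_eq_top_iff_subset, Set.singleton_subset_iff] at hle
  exact hle

theorem le_center_of_sup_eq_top (hsup : H ⊔ K = ⊤)
    (hcomm : ∀ h ∈ H, ∀ k ∈ K, Commute h k) (hK : ∀ a ∈ K, ∀ b ∈ K, a * b = b * a) :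
    K ≤ center G :=
  fun k hk => mem_center_of_sup_eq_top hsup (fun h hh => hcomm h hh k hk)
    (fun k' hk' => hK k' hk' k hk)

theorem center_subgroupOf_eq_of_sup_eq_top (hsup : H ⊔ K = ⊤)
    (hcomm : ∀ h ∈ H, ∀ k ∈ K, Commute h k) : (center G).subgroupOf H = center H := by
  ext ⟨h, hh⟩
  rw [mem_subgroupOf]
  refine ⟨fun hc => mem_center_iff.2 fun g => Subtype.ext (mem_center_iff.1 hc g), fun hc => ?_⟩
  exact mem_center_of_sup_eq_top hsup
    (fun h' hh' => congrArg Subtype.val (mem_center_iff.1 hc ⟨h', hh'⟩))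
    (fun k hk => (hcomm h hh k hk).symm)

theorem index_center_eq_of_sup_eq_top (hsup : H ⊔ K = ⊤)
    (hcomm : ∀ h ∈ H, ∀ k ∈ K, Commute h k) (hK : ∀ a ∈ K, ∀ b ∈ K, a * b = b * a) :
    (center G).index = (center H).index := by
  have hsup' : H ⊔ center G = ⊤ :=
    top_le_iff.1 (hsup ▸ sup_le_sup_left (le_center_of_sup_eq_top hsup hcomm hK) H)
  rw [← relIndex_top_right, ← hsup', relIndex_sup_right, relIndex,
    center_subgroupOf_eq_of_sup_eq_top hsup hcomm]

theorem card_center_le_of_sup_eq_top [Finite G] (hsup : H ⊔ K = ⊤)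
    (hcomm : ∀ h ∈ H, ∀ k ∈ K, Commute h k) :
    Nat.card (center H) ≤ Nat.card (center G) := by
  rw [← center_subgroupOf_eq_of_sup_eq_top hsup hcomm]
  exact Nat.card_le_card_of_injective (fun x => ⟨x.1.1, x.2⟩)
    (fun x y hxy => by ext; simpa using congrArg Subtype.val hxy)

end InternalProduct

section Cosets

variable {H K : Subgroup G} {x : G}

theorem mul_inv_mem_of_relIndex_eq_two (h2 : H.relIndex K = 2) (hx : x ∈ K) (hxH : x ∉ H)
    {g : G} (hg : g ∈ K) (hgH : g ∉ H) : g * x⁻¹ ∈ H := by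
  obtain ⟨a, -, ha⟩ := relIndex_eq_two_iff.1 h2
  have hga := (ha g hg).or.resolve_right hgH
  have hxa := (ha x hx).or.resolve_right hxH
  simpa [mul_assoc] using H.mul_mem hga (H.inv_mem hxa)

theorem coe_eq_union_image_mul_right_of_relIndex_eq_two (hHK : H ≤ K) (h2 : H.relIndex K = 2)
    (hx : x ∈ K) (hxH : x ∉ H) : (K : Set G) = (H : Set G) ∪ (· * x) '' H := by
  ext g
  simp only [Set.mem_union, Set.image_mul_right, Set.mem_preimage, SetLike.mem_coe]
  constructor
  · intro hg
    by_cases hgH : g ∈ H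
    · exact .inl hgH
    · exact .inr (mul_inv_mem_of_relIndex_eq_two h2 hx hxH hg hgH)
  · rintro (hg | hg)
    · exact hHK hg
    · simpa using K.mul_mem (hHK hg) hx

theorem disjoint_image_mul_right_of_notMem (hxH : x ∉ H) :
    Disjoint (H : Set G) ((· * x) '' H) := by
  rw [Set.disjoint_left]
  rintro _ hg ⟨h, hh, rfl⟩
  exact hxH (by simpa using H.mul_mem (H.inv_mem hh) hg)

theorem relIndex_eq_and_index_eq_of_index_eq_sq {p : ℕ} (hp : p.Prime) (hHK : H ≤ K)
    (hH : H.index = p ^ 2) (hKH : ¬K ≤ H) (hK : K ≠ ⊤) :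
    H.relIndex K = p ∧ K.index = p := by
  have hmul := relIndex_mul_index hHK
  rw [hH] at hmul
  obtain ⟨i, hi, hrel⟩ := (Nat.dvd_prime_pow hp).1 (Dvd.intro _ hmul)
  have hi0 : i ≠ 0 := by
    rintro rfl
    exact hKH (relIndex_eq_one.1 (by simpa using hrel))
  have hi2 : i ≠ 2 := by
    rintro rfl
    rw [hrel] at hmul
    exact hK (index_eq_one.1 (by simpa [hp.pos.ne'] using hmul))
  obtain rfl : i = 1 := by omega
  rw [pow_one] at hrel
  refine ⟨hrel, Nat.eq_of_mul_eq_mul_left hp.pos ?_⟩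
  rw [← hrel, hmul, hrel, sq]

end Cosets

theorem mul_comm_of_mem_closure_insert_center (t : G) {a b : G}
    (ha : a ∈ closure (insert t (center G : Set G)))
    (hb : b ∈ closure (insert t (center G : Set G))) : a * b = b * a := by
  have : IsMulCommutative (closure (insert t (center G : Set G))) := by
    refine isMulCommutative_closure ?_
    rintro x (rfl | hx) y (rfl | hy)
    · rfl
    · exact mem_center_iff.1 hy x
    · exact (mem_center_iff.1 hx y).symm
    · exact mem_center_iff.1 hy x
  exact setLike_mul_comm ha hb

theorem isCommSet_image_mul_right_center (x : G) :
    IsCommSet ((· * x) '' (center G : Set G)) := by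
  rintro _ ⟨z, hz, rfl⟩ _ ⟨z', hz', rfl⟩
  have hzc : ∀ g, Commute z g := fun g => (mem_center_iff.1 hz g).symm
  have hz'c : ∀ g, Commute z' g := fun g => (mem_center_iff.1 hz' g).symm
  exact ((hzc _).mul_left ((hz'c x).symm.mul_right (Commute.refl x))).eq

end Subgroup

open Subgroup

def HasTwoAbelianPartitionByCenterCosets (G : Type*) [Group G] : Prop :=
  ∃ (A : Subgroup G) (A₁ A₂ : Set G),
    (∀ a ∈ A, ∀ b ∈ A, a * b = b * a) ∧ A.index = 2 ∧
    (∃ g₁ : G, A₁ = (· * g₁) '' (Subgroup.center G : Set G)) ∧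
    (∃ g₂ : G, A₂ = (· * g₂) '' (Subgroup.center G : Set G)) ∧
    IsCommSet A₁ ∧ IsCommSet A₂ ∧ 1 < A₁.ncard ∧ 1 < A₂.ncard ∧
    Disjoint (A : Set G) A₁ ∧ Disjoint (A : Set G) A₂ ∧ Disjoint A₁ A₂ ∧
    (A : Set G) ∪ A₁ ∪ A₂ = Set.univ

theorem hasTwoAbelianPartitionByCenterCosets_of_index_center_eq_four {G : Type*} [Group G]
    (hZ4 : (center G).index = 4) (hZ : 1 < Nat.card (center G)) :
    HasTwoAbelianPartitionByCenterCosets G := by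
  set Z := center G
  obtain ⟨t, htZ⟩ : ∃ t, t ∉ Z := by
    by_contra! h
    simp [(eq_top_iff' Z).2 h] at hZ4
  set A := closure (insert t (Z : Set G))
  have hA : ∀ a ∈ A, ∀ b ∈ A, a * b = b * a := fun a ha b hb =>
    mul_comm_of_mem_closure_insert_center t ha hb
  have hZA : Z ≤ A := fun z hz => subset_closure (Set.mem_insert_of_mem t hz)
  have htA : t ∈ A := subset_closure (Set.mem_insert t _)
  have hAtop : A ≠ ⊤ := fun h =>
    htZ (mem_center_iff.2 fun g => hA g (h ▸ mem_top g) t htA)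
  obtain ⟨hZA2, hA2⟩ := relIndex_eq_and_index_eq_of_index_eq_sq Nat.prime_two hZA hZ4
    (fun h => htZ (h htA)) hAtop
  obtain ⟨u, huA⟩ : ∃ u, u ∉ A := by
    by_contra! h
    exact hAtop ((eq_top_iff' A).2 h)
  have hA_eq := coe_eq_union_image_mul_right_of_relIndex_eq_two hZA hZA2 htA htZ
  have hG_eq := coe_eq_union_image_mul_right_of_relIndex_eq_two le_top
    (by rwa [relIndex_top_right]) (mem_top u) huA
  have hAu :
      (· * u) '' (A : Set G) = (· * u) '' (Z : Set G) ∪ (· * (t * u)) '' (Z : Set G) := by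
    rw [hA_eq, Set.image_union, Set.image_image]
    simp only [mul_assoc]
  have hcard (x : G) : 1 < ((· * x) '' (Z : Set G)).ncard := by
    rwa [Set.ncard_image_of_injective _ (mul_left_injective x), ← Nat.card_coe_set_eq,
      SetLike.coe_sort_coe]
  have hdisj := disjoint_image_mul_right_of_notMem huA
  rw [hAu] at hdisj
  refine ⟨A, _, _, hA, hA2, ⟨u, rfl⟩, ⟨t * u, rfl⟩, isCommSet_image_mul_right_center u,
    isCommSet_image_mul_right_center (t * u), hcard u, hcard (t * u),
    hdisj.mono_right Set.subset_union_left, hdisj.mono_right Set.subset_union_right, ?_, ?_⟩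
  · have := Set.disjoint_image_of_injective (mul_left_injective u)
      (disjoint_image_mul_right_of_notMem htZ)
    simpa only [Set.image_image, mul_assoc] using this
  · rw [Set.union_assoc, ← hAu, ← hG_eq, coe_top]

/-- If `G = P × Q` (internally) with `P` a Sylow 2-subgroup satisfying
`P/Z(P) ≅ ℤ₂ × ℤ₂` and `Q` abelian, then `G` has a 2-abelian partition: `G` is the
disjoint union of an abelian subgroup `A` of index 2 and two commuting subsets, each a
coset of the center `Z(G)`. -/
theorem two_abelian_partition_of_structure {G : Type*} [Group G] [Finite G]
    (P : Sylow 2 G) (Q : Subgroup G)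
    (hPn : (P : Subgroup G).Normal) (hQn : Q.Normal) (hcompl : IsCompl (P : Subgroup G) Q)
    (hQ : ∀ a ∈ Q, ∀ b ∈ Q, a * b = b * a)
    (hPZ : Nonempty ((↥(P : Subgroup G) ⧸ Subgroup.center ↥(P : Subgroup G)) ≃*
      (Multiplicative (ZMod 2) × Multiplicative (ZMod 2)))) :
    ∃ (A : Subgroup G) (A₁ A₂ : Set G),
      (∀ a ∈ A, ∀ b ∈ A, a * b = b * a) ∧ A.index = 2 ∧
      (∃ g₁ : G, A₁ = (· * g₁) '' (Subgroup.center G : Set G)) ∧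
      (∃ g₂ : G, A₂ = (· * g₂) '' (Subgroup.center G : Set G)) ∧
      IsCommSet A₁ ∧ IsCommSet A₂ ∧ 1 < A₁.ncard ∧ 1 < A₂.ncard ∧
      Disjoint (A : Set G) A₁ ∧ Disjoint (A : Set G) A₂ ∧ Disjoint A₁ A₂ ∧
      (A : Set G) ∪ A₁ ∪ A₂ = Set.univ := by
  obtain ⟨φ⟩ := hPZ
  have hcomm : ∀ p ∈ (P : Subgroup G), ∀ q ∈ Q, Commute p q := fun p hp q hq =>
    commute_of_normal_of_disjoint _ _ hPn hQn hcompl.disjoint p q hp hq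
  have hP4 : (center P).index = 4 := by
    rw [index_eq_card, Nat.card_congr φ.toEquiv]
    simp
  have : Nontrivial P := by
    by_contra h
    rw [not_nontrivial_iff_subsingleton] at h
    simp [Subsingleton.elim (center P) ⊤] at hP4
  have := P.isPGroup'.center_nontrivial
  refine hasTwoAbelianPartitionByCenterCosets_of_index_center_eq_four ?_ ?_
  · rw [index_center_eq_of_sup_eq_top hcompl.sup_eq_top hcomm hQ, hP4]
  · exact (Finite.one_lt_card_iff_nontrivial.2 this).trans_le
      (card_center_le_of_sup_eq_top hcompl.sup_eq_top hcomm)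
end

section
/- Let G be a finite nonabelian group and H a proper subgroup such that every two distinct elements of G ∖ H fail to commute. Then H is abelian of odd order, every element of G ∖ H is an involution, and G is a Frobenius group with kernel H and complement of order 2. -/
/-!
Every `x ∉ H` commutes with `x⁻¹ ∉ H`, so it is an involution. If `x, y ∉ H` but `x * y ∉ H`,
then `x`, `y`, `x * y` are involutions, which forces `x` and `y` to commute; hence `H` has index 2.
For `a ∈ H` the element `x * a` is again an involution, so conjugation by `x` inverts `H`, and
inversion being a homomorphism makes `H` abelian. An element `a ∈ H` commuting with `x` makes `x`
and `x * a` commute, so `a = 1`: the action is fixed-point-free, and in particular `H` has no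
involutions, so its order is odd by Cauchy's theorem.
-/

namespace Subgroup

variable {G : Type*} [Group G]

def NoncommutingComplement (H : Subgroup G) : Prop :=
  ∀ x ∉ H, ∀ y ∉ H, Commute x y → x = y

namespace NoncommutingComplement

variable {H : Subgroup G} {x y a b : G}

theorem inv_eq_self (hH : H.NoncommutingComplement) (hx : x ∉ H) : x⁻¹ = x :=
  hH _ (by rwa [inv_mem_iff]) _ hx (Commute.refl x).inv_left

theorem mul_self_eq_one (hH : H.NoncommutingComplement) (hx : x ∉ H) : x * x = 1 :=
  mul_eq_one_iff_eq_inv.mpr (hH.inv_eq_self hx).symm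

theorem mul_mem_of_notMem (hH : H.NoncommutingComplement) (hx : x ∉ H) (hy : y ∉ H) :
    x * y ∈ H := by
  by_contra hxy
  have hcomm : Commute x y := by
    rw [Commute, SemiconjBy, ← hH.inv_eq_self hxy, mul_inv_rev, hH.inv_eq_self hx,
      hH.inv_eq_self hy]
  rw [hH x hx y hy hcomm, hH.mul_self_eq_one hy] at hxy
  exact hxy H.one_mem

theorem index_eq_two (hH : H.NoncommutingComplement) (hx : x ∉ H) : H.index = 2 :=
  index_eq_two_iff_exists_notMem_and.mpr
    ⟨x, hx, fun b => (em (b ∈ H)).symm.imp_left (hH.mul_mem_of_notMem · hx)⟩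

theorem conj_eq_inv (hH : H.NoncommutingComplement) (hx : x ∉ H) (ha : a ∈ H) :
    x * a * x⁻¹ = a⁻¹ := by
  have hxa : x * a ∉ H := mt (H.mul_mem_cancel_right ha).mp hx
  rw [hH.inv_eq_self hx, eq_inv_iff_mul_eq_one, mul_assoc, hH.mul_self_eq_one hxa]

theorem commute_of_mem (hH : H.NoncommutingComplement) (hx : x ∉ H) (ha : a ∈ H) (hb : b ∈ H) :
    Commute a b := by
  rw [← Commute.inv_inv_iff]
  calc a⁻¹ * b⁻¹ = (x * a * x⁻¹) * (x * b * x⁻¹) := by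
        rw [hH.conj_eq_inv hx ha, hH.conj_eq_inv hx hb]
    _ = x * (a * b) * x⁻¹ := by group
    _ = b⁻¹ * a⁻¹ := by rw [hH.conj_eq_inv hx (H.mul_mem ha hb), mul_inv_rev]

theorem eq_one_of_commute (hH : H.NoncommutingComplement) (hx : x ∉ H) (ha : a ∈ H)
    (hxa : Commute x a) : a = 1 := by
  have hxa' : x * a ∉ H := mt (H.mul_mem_cancel_right ha).mp hx
  simpa using hH x hx (x * a) hxa' ((Commute.refl x).mul_right hxa)

theorem odd_card [Finite G] (hH : H.NoncommutingComplement) (hx : x ∉ H) :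
    Odd (Nat.card H) := by
  rw [← Nat.not_even_iff_odd, even_iff_two_dvd]
  intro h2
  obtain ⟨g, hg⟩ := exists_prime_orderOf_dvd_card' 2 h2
  have hg_inv : (g : G)⁻¹ = g := by
    rw [inv_eq_iff_mul_eq_one, ← pow_two, ← coe_pow, ← hg, pow_orderOf_eq_one, coe_one]
  have hcomm : Commute x g := by
    rw [Commute, SemiconjBy, ← mul_inv_eq_iff_eq_mul, hH.conj_eq_inv hx g.2, hg_inv]
  have hg_one : g = 1 := Subtype.ext (hH.eq_one_of_commute hx g.2 hcomm)
  simp [hg_one] at hg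

end NoncommutingComplement

end Subgroup

theorem frobenius_of_noncommuting_complement_general {G : Type*} [Group G] [Finite G]
    (H : Subgroup G) (hH : H ≠ ⊤)
    (hnc : ∀ x : G, x ∉ H → ∀ y : G, y ∉ H → x ≠ y → x * y ≠ y * x) :
    (∀ a ∈ H, ∀ b ∈ H, a * b = b * a) ∧ Odd (Nat.card H) ∧
    (∀ x : G, x ∉ H → x ≠ 1 ∧ x ^ 2 = 1) ∧
    H.Normal ∧ Nat.card G = 2 * Nat.card H ∧
    (∀ x : G, x ∉ H → ∀ h ∈ H, h ≠ 1 → x * h * x⁻¹ ≠ h) := by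
  have hnc' : H.NoncommutingComplement := fun x hx y hy hxy =>
    not_imp_not.mp (hnc x hx y hy) hxy
  obtain ⟨x, -, hx⟩ := SetLike.exists_of_lt hH.lt_top
  have hindex := hnc'.index_eq_two hx
  refine ⟨fun a ha b hb => hnc'.commute_of_mem hx ha hb, hnc'.odd_card hx,
    fun y hy => ⟨fun h => hy (h ▸ H.one_mem), (pow_two y).trans (hnc'.mul_self_eq_one hy)⟩,
    Subgroup.normal_of_index_eq_two hindex, ?_,
    fun y hy h hh h_ne_one hfix =>
      h_ne_one (hnc'.eq_one_of_commute hy hh (mul_inv_eq_iff_eq_mul.mp hfix))⟩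
  rw [← H.card_mul_index, hindex, mul_comm]

/-- If `G` is a finite nonabelian group with a proper subgroup `H` such that no two
distinct elements of `G ∖ H` commute, then `H` is abelian of odd order, every element
outside `H` is an involution, and `G` is a Frobenius group with kernel `H` and
complement of order 2. -/
theorem frobenius_of_noncommuting_complement {G : Type*} [Group G] [Finite G]
    (hG : ¬ ∀ a b : G, a * b = b * a)
    (H : Subgroup G) (hH : H ≠ ⊤)
    (hnc : ∀ x : G, x ∉ H → ∀ y : G, y ∉ H → x ≠ y → x * y ≠ y * x) :
    (∀ a ∈ H, ∀ b ∈ H, a * b = b * a) ∧ Odd (Nat.card H) ∧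
    (∀ x : G, x ∉ H → x ≠ 1 ∧ x ^ 2 = 1) ∧
    H.Normal ∧ Nat.card G = 2 * Nat.card H ∧
    (∀ x : G, x ∉ H → ∀ h ∈ H, h ≠ 1 → x * h * x⁻¹ ≠ h) :=
  frobenius_of_noncommuting_complement_general H hH hnc
end
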